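/- For every ε > 0 and all x ∈ ℝ^m, one has ε⟨e,x⟩ ≤ Σᵢ ψ_ε′(xᵢ)·xᵢ. Consequently, for every x ∈ ℝ^m with ⟨e,x⟩ ≥ 0 and every u ∈ Δ, Σᵢ ψ_ε′(xᵢ)·(xᵢ − ⟨e,x⟩⁺uᵢ) ≥ 0. -/

import Mathlib

open scoped BigOperators

/-- The piecewise function ψ. -/
noncomputable def psiFn (t : ℝ) : ℝ :=
  if t ≤ -1 then -(1/2)
  else if t ≤ 0 then (t+1)^3 - (1/2)*(t+1)^4 - 1/2
  else t

/-- ψ_ε(t) := ψ(εt). -/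
noncomputable def psiE (ε t : ℝ) : ℝ := psiFn (ε * t)

/-- Ψ(x) := Σᵢ ψ(xᵢ)/μᵢ. -/
noncomputable def bigPsi {m : ℕ} (μ : Fin m → ℝ) (x : Fin m → ℝ) : ℝ :=
  ∑ i, psiFn (x i) / μ i

/-- Ψ_ε(x) := Σᵢ ψ_ε(xᵢ)/μᵢ. -/
noncomputable def bigPsiE {m : ℕ} (μ : Fin m → ℝ) (ε : ℝ) (x : Fin m → ℝ) : ℝ :=
  ∑ i, psiE ε (x i) / μ i

/-- The drift b(x,u) with bᵢ(x,u) = −ρμᵢ/m − μᵢ(xᵢ − ⟨e,x⟩⁺uᵢ) − γᵢ⟨e,x⟩⁺uᵢ. -/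
noncomputable def drift {m : ℕ} (ρ : ℝ) (μ γ : Fin m → ℝ) (x u : Fin m → ℝ) :
    Fin m → ℝ :=
  fun i => -(ρ * μ i / m) - μ i * (x i - max (∑ j, x j) 0 * u i)
    - γ i * max (∑ j, x j) 0 * u i

/-- The extended generator L_u f(x) = Σᵢ λ̃ᵢ ∂²f/∂xᵢ²(x) + ⟨b(x,u), ∇f(x)⟩. -/
noncomputable def genL {m : ℕ} (lam : Fin m → ℝ) (ρ : ℝ) (μ γ : Fin m → ℝ)
    (u : Fin m → ℝ) (f : (Fin m → ℝ) → ℝ) (x : Fin m → ℝ) : ℝ :=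
  ∑ i, lam i * fderiv ℝ (fun y => fderiv ℝ f y (Pi.single i 1)) x (Pi.single i 1)
    + fderiv ℝ f x (drift ρ μ γ x u)

/-- ‖x‖₁ = Σᵢ|xᵢ|. -/
noncomputable def norm1 {m : ℕ} (x : Fin m → ℝ) : ℝ := ∑ i, |x i|

/-- ‖x⁻‖₁ = Σᵢ max(−xᵢ,0). -/
noncomputable def norm1neg {m : ℕ} (x : Fin m → ℝ) : ℝ := ∑ i, max (-(x i)) 0

/-! On [−1, 0] one has ψ'(t) = 3(t+1)² − 2(t+1)³, which is 0 at −1 and 1 at 0, so ψ is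
differentiable everywhere, and 1 − ψ'(t) = t²(2t+3). Hence ψ' ≤ 1, and t ≤ ψ'(t)·t for every t
(on [−1, 0] this is t³(2t+3) ≤ 0; for t ≤ −1 it reads t ≤ 0). Rescaling, ψ_ε' ≤ ε and
εt ≤ ψ_ε'(t)·t; summing gives the first claim, and for u ∈ Δ and ⟨e,x⟩ ≥ 0 the subtracted term
Σᵢ ψ_ε'(xᵢ)⟨e,x⟩uᵢ is at most ε⟨e,x⟩, which the first claim dominates. -/

open Filter Set Topology Finset

theorem HasDerivAt.of_eventuallyEq_nhdsLE_nhdsGE {f g h : ℝ → ℝ} {a d : ℝ}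
    (hg : HasDerivAt g d a) (hh : HasDerivAt h d a)
    (hfg : f =ᶠ[𝓝[≤] a] g) (hfh : f =ᶠ[𝓝[≥] a] h) : HasDerivAt f d a := by
  have hu := (hg.hasDerivWithinAt.congr_of_eventuallyEq_of_mem hfg self_mem_Iic).union
    (hh.hasDerivWithinAt.congr_of_eventuallyEq_of_mem hfh self_mem_Ici)
  rwa [Iic_union_Ici, hasDerivWithinAt_univ] at hu

noncomputable def psiPoly (t : ℝ) : ℝ := (t+1)^3 - (1/2)*(t+1)^4 - 1/2

noncomputable def psiFnDeriv (t : ℝ) : ℝ :=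
  if t ≤ -1 then 0 else if t ≤ 0 then 3*(t+1)^2 - 2*(t+1)^3 else 1

theorem hasDerivAt_psiPoly (t : ℝ) : HasDerivAt psiPoly (3*(t+1)^2 - 2*(t+1)^3) t := by
  have h1 : HasDerivAt (fun s : ℝ => s + 1) 1 t := (hasDerivAt_id t).add_const 1
  exact (((h1.fun_pow 3).sub ((h1.fun_pow 4).const_mul (1/2))).sub_const (1/2)).congr_deriv
    (by ring)

theorem psiFn_eqOn_Iic : EqOn psiFn (fun _ => -(1/2)) (Iic (-1)) := fun t (ht : t ≤ -1) => by
  simp [psiFn, ht]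

theorem psiFn_eqOn_Icc : EqOn psiFn psiPoly (Icc (-1) 0) := fun t ⟨ht₁, ht₂⟩ => by
  rcases ht₁.eq_or_lt with rfl | ht₁
  · norm_num [psiFn, psiPoly]
  · simp [psiFn, psiPoly, not_le.mpr ht₁, ht₂]

theorem psiFn_eqOn_Ici : EqOn psiFn id (Ici 0) := fun t (ht : 0 ≤ t) => by
  rcases ht.eq_or_lt with rfl | ht
  · norm_num [psiFn]
  · simp [psiFn, not_le.mpr ht, not_le.mpr (show (-1 : ℝ) < t by linarith)]

theorem hasDerivAt_psiFn (t : ℝ) : HasDerivAt psiFn (psiFnDeriv t) t := by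
  rcases lt_trichotomy t (-1) with ht | rfl | ht
  · rw [show psiFnDeriv t = 0 by simp [psiFnDeriv, ht.le]]
    exact (hasDerivAt_const t _).congr_of_eventuallyEq
      (eventuallyEq_of_mem (Iio_mem_nhds ht) fun s hs => psiFn_eqOn_Iic (Iio_subset_Iic_self hs))
  · rw [show psiFnDeriv (-1) = 0 by norm_num [psiFnDeriv]]
    refine (hasDerivAt_const (-1 : ℝ) (-(1/2 : ℝ))).of_eventuallyEq_nhdsLE_nhdsGE
      ((hasDerivAt_psiPoly (-1)).congr_deriv (by norm_num))
      (eventuallyEq_nhdsWithin_of_eqOn psiFn_eqOn_Iic) ?_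
    exact eventuallyEq_of_mem (Icc_mem_nhdsGE (by norm_num)) psiFn_eqOn_Icc
  rcases lt_trichotomy t 0 with ht₀ | rfl | ht₀
  · rw [show psiFnDeriv t = 3*(t+1)^2 - 2*(t+1)^3 by simp [psiFnDeriv, not_le.mpr ht, ht₀.le]]
    exact (hasDerivAt_psiPoly t).congr_of_eventuallyEq <| eventuallyEq_of_mem
      (Ioo_mem_nhds ht ht₀) fun s hs => psiFn_eqOn_Icc (Ioo_subset_Icc_self hs)
  · rw [show psiFnDeriv 0 = 1 by norm_num [psiFnDeriv]]
    refine ((hasDerivAt_psiPoly 0).congr_deriv (by norm_num)).of_eventuallyEq_nhdsLE_nhdsGE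
      (hasDerivAt_id 0) ?_ (eventuallyEq_nhdsWithin_of_eqOn psiFn_eqOn_Ici)
    exact eventuallyEq_of_mem (Icc_mem_nhdsLE (by norm_num)) psiFn_eqOn_Icc
  · rw [show psiFnDeriv t = 1 by simp [psiFnDeriv, not_le.mpr ht, not_le.mpr ht₀]]
    exact (hasDerivAt_id t).congr_of_eventuallyEq
      (eventuallyEq_of_mem (Ioi_mem_nhds ht₀) fun s hs => psiFn_eqOn_Ici (Ioi_subset_Ici_self hs))

theorem deriv_psiE (ε t : ℝ) : deriv (psiE ε) t = ε * psiFnDeriv (ε * t) := by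
  rw [show psiE ε = fun s => psiFn (ε * s) from rfl, deriv_comp_mul_left,
    (hasDerivAt_psiFn _).deriv, smul_eq_mul]

theorem psiFnDeriv_le_one (t : ℝ) : psiFnDeriv t ≤ 1 := by
  unfold psiFnDeriv
  split_ifs with h₁
  · norm_num
  · nlinarith [sq_nonneg t]
  · norm_num

theorem le_psiFnDeriv_mul_self (t : ℝ) : t ≤ psiFnDeriv t * t := by
  unfold psiFnDeriv
  split_ifs with h₁ h₂
  · linarith
  · nlinarith [sq_nonneg t, mul_nonneg (sq_nonneg t) (neg_nonneg.mpr h₂)]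
  · simp

theorem deriv_psiE_le {ε : ℝ} (hε : 0 ≤ ε) (t : ℝ) : deriv (psiE ε) t ≤ ε := by
  rw [deriv_psiE]
  exact mul_le_of_le_one_right hε (psiFnDeriv_le_one _)

theorem mul_le_deriv_psiE_mul (ε t : ℝ) : ε * t ≤ deriv (psiE ε) t * t := by
  rw [deriv_psiE, mul_assoc, mul_left_comm]
  simpa [mul_assoc] using le_psiFnDeriv_mul_self (ε * t)

theorem sum_mul_sub_mul_nonneg_of_mem_stdSimplex {ι : Type*} [Fintype ι] {d x u : ι → ℝ}
    {c : ℝ}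
    (hd : ∀ i, d i ≤ c) (hdx : c * ∑ i, x i ≤ ∑ i, d i * x i) (hx : 0 ≤ ∑ i, x i)
    (hu : u ∈ stdSimplex ℝ ι) : 0 ≤ ∑ i, d i * (x i - max (∑ j, x j) 0 * u i) := by
  have hdu : ∑ i, d i * u i ≤ c := calc
    ∑ i, d i * u i ≤ ∑ i, c * u i :=
      sum_le_sum fun i _ => mul_le_mul_of_nonneg_right (hd i) (hu.1 i)
    _ = c := by rw [← mul_sum, hu.2, mul_one]
  have hsplit : ∑ i, d i * (x i - max (∑ j, x j) 0 * u i)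
      = ∑ i, d i * x i - (∑ j, x j) * ∑ i, d i * u i := by
    rw [max_eq_left hx, mul_sum, ← sum_sub_distrib]
    exact sum_congr rfl fun i _ => by ring
  rw [hsplit]
  nlinarith [mul_le_mul_of_nonneg_left hdu hx]

theorem stmt3_general {m : ℕ} (ε : ℝ) (hε : 0 < ε) :
    (∀ x : Fin m → ℝ, ε * ∑ i, x i ≤ ∑ i, deriv (psiE ε) (x i) * x i) ∧
    (∀ x : Fin m → ℝ, 0 ≤ ∑ i, x i → ∀ u ∈ stdSimplex ℝ (Fin m),
      0 ≤ ∑ i, deriv (psiE ε) (x i) * (x i - max (∑ j, x j) 0 * u i)) := by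
  have hsum (x : Fin m → ℝ) : ε * ∑ i, x i ≤ ∑ i, deriv (psiE ε) (x i) * x i := by
    rw [mul_sum]
    exact sum_le_sum fun i _ => mul_le_deriv_psiE_mul ε (x i)
  exact ⟨hsum, fun x hx u hu =>
    sum_mul_sub_mul_nonneg_of_mem_stdSimplex (fun i => deriv_psiE_le hε.le (x i)) (hsum x) hx hu⟩

/-- ε⟨e,x⟩ ≤ Σᵢ ψ_ε′(xᵢ)xᵢ, and consequently, for x with ⟨e,x⟩ ≥ 0
and u ∈ Δ, Σᵢ ψ_ε′(xᵢ)(xᵢ − ⟨e,x⟩⁺uᵢ) ≥ 0. -/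
theorem stmt3 {m : ℕ} (hm : 1 ≤ m) (ε : ℝ) (hε : 0 < ε) :
    (∀ x : Fin m → ℝ, ε * ∑ i, x i ≤ ∑ i, deriv (psiE ε) (x i) * x i) ∧
    (∀ x : Fin m → ℝ, 0 ≤ ∑ i, x i → ∀ u ∈ stdSimplex ℝ (Fin m),
      0 ≤ ∑ i, deriv (psiE ε) (x i) * (x i - max (∑ j, x j) 0 * u i)) :=
  stmt3_general ε hε
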